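/- arXiv:1906.11643 — 4 statements merged into one kernel-verified Lean document; each statement's English description precedes it below -/
import Mathlib

section
/- The formal power series $I_0(q) = \sum_{d=0}^{\infty} \frac{(3d)!}{(d!)^3} q^d$ satisfies the differential equation $(1-27q)\left(q\frac{d}{dq}\right)^2 I_0 - 27q\left(q\frac{d}{dq}\right) I_0 - 6q\, I_0 = 0$. -/
open PowerSeries

/-- The logarithmic derivative operator `D = q d/dq` on formal power series. -/
noncomputable def logD (f : PowerSeries ℚ) : PowerSeries ℚ :=
  PowerSeries.X * PowerSeries.derivative ℚ f

/-- `I₀(q) = ∑_{d≥0} (3d)!/(d!)³ qᵈ`. -/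
noncomputable def I0 : PowerSeries ℚ :=
  PowerSeries.mk fun d => ((3 * d).factorial : ℚ) / ((d.factorial : ℚ)) ^ 3

/-!
Since `D` acts on `qⁿ` as multiplication by `n`, the coefficient of `qⁿ⁺¹` in the left-hand
side is `(n+1)² aₙ₊₁ - 3(3n+1)(3n+2) aₙ` (and the constant coefficient vanishes), so the
equation is the two-term recurrence `(n+1)² aₙ₊₁ = 3(3n+1)(3n+2) aₙ` for `aₙ = (3n)!/(n!)³`,
which follows from `(3n+3)! = (3n+3)(3n+2)(3n+1)(3n)!`.
-/

lemma coeff_logD (f : PowerSeries ℚ) (n : ℕ) : coeff n (logD f) = n * coeff n f := by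
  cases n with
  | zero => simp [logD]
  | succ n => rw [logD, coeff_succ_X_mul, coeff_derivative]; push_cast; ring

lemma constantCoeff_logD (f : PowerSeries ℚ) : constantCoeff (logD f) = 0 := by
  simp [logD]

lemma coeff_succ_ode (f : PowerSeries ℚ) (n : ℕ) :
    coeff (n + 1) ((1 - 27 * X) * logD (logD f) - 27 * X * logD f - 6 * X * f)
      = (n + 1) ^ 2 * coeff (n + 1) f - 3 * (3 * n + 1) * (3 * n + 2) * coeff n f := by
  have h27 : (27 : PowerSeries ℚ) = C 27 := (map_ofNat C 27).symm
  have h6 : (6 : PowerSeries ℚ) = C 6 := (map_ofNat C 6).symm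
  rw [sub_mul, one_mul, h27, h6, mul_comm (C 27) X, mul_comm (C 6) X]
  simp only [mul_assoc, map_sub, coeff_succ_X_mul, coeff_C_mul, coeff_logD]
  push_cast
  ring

lemma constantCoeff_ode (f : PowerSeries ℚ) :
    constantCoeff ((1 - 27 * X) * logD (logD f) - 27 * X * logD f - 6 * X * f) = 0 := by
  simp [constantCoeff_logD]

lemma ode_eq_zero_of_coeff_recurrence (f : PowerSeries ℚ)
    (hf : ∀ n : ℕ, (n + 1) ^ 2 * coeff (n + 1) f = 3 * (3 * n + 1) * (3 * n + 2) * coeff n f) :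
    (1 - 27 * X) * logD (logD f) - 27 * X * logD f - 6 * X * f = 0 := by
  ext n
  cases n with
  | zero => simpa using constantCoeff_ode f
  | succ n => rw [coeff_succ_ode, hf, sub_self, map_zero]

lemma coeff_I0_succ (n : ℕ) :
    (n + 1) ^ 2 * coeff (n + 1) I0 = 3 * (3 * n + 1) * (3 * n + 2) * coeff n I0 := by
  have h3 : (3 * (n + 1)).factorial
      = (3 * n + 3) * ((3 * n + 2) * ((3 * n + 1) * (3 * n).factorial)) := by
    rw [show 3 * (n + 1) = 3 * n + 2 + 1 by ring, Nat.factorial_succ, Nat.factorial_succ,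
      Nat.factorial_succ]
  have hn : (n.factorial : ℚ) ≠ 0 := Nat.cast_ne_zero.2 n.factorial_ne_zero
  simp only [I0, coeff_mk]
  rw [h3, Nat.factorial_succ]
  push_cast
  field_simp

/-- `(1 - 27q)(q d/dq)² I₀ - 27 q (q d/dq) I₀ - 6 q I₀ = 0`. -/
theorem I0_ODE :
    (1 - 27 * PowerSeries.X) * logD (logD I0)
      - 27 * PowerSeries.X * logD I0 - 6 * PowerSeries.X * I0 = 0 :=
  ode_eq_zero_of_coeff_recurrence I0 coeff_I0_succ
end

section
/- Define $Y_k = (L^{-1}q\frac{d}{dq})^k \ln(q^{1/3}L)$ where $L = (1-27q)^{-1/3}$. Then $L^2 = 3Y_1$, $L = 9Y_1^2 - \frac{9}{2}Y_2$, and $1 = 27Y_1^3 - \frac{135}{2}Y_1 Y_2 + \frac{27}{2} Y_3$. -/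
open PowerSeries

/-- with `L = (1-27q)^{-1/3}`,
`Y₁ = L⁻¹ q d/dq ln(q^{1/3}L) = (1/3)L²` and `Y_{k+1} = L⁻¹ D Y_k`, the
polynomial identities `L² = 3Y₁`, `L = 9Y₁² - (9/2)Y₂` and
`1 = 27Y₁³ - (135/2) Y₁Y₂ + (27/2) Y₃` hold. -/
theorem Y_identities (L : PowerSeries ℚ)
    (hL : L ^ 3 * (1 - 27 * PowerSeries.X) = 1)
    (hL0 : PowerSeries.constantCoeff L = 1)
    (Y1 Y2 Y3 : PowerSeries ℚ)
    (hY1 : Y1 = L⁻¹ * (PowerSeries.C (1/3 : ℚ) + logD L * L⁻¹))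
    (hY2 : Y2 = L⁻¹ * logD Y1)
    (hY3 : Y3 = L⁻¹ * logD Y2) :
    L ^ 2 = 3 * Y1 ∧
    L = 9 * Y1 ^ 2 - PowerSeries.C (9/2 : ℚ) * Y2 ∧
    1 = 27 * Y1 ^ 3 - PowerSeries.C (135/2 : ℚ) * (Y1 * Y2)
          + PowerSeries.C (27/2 : ℚ) * Y3 := by
  have hLne : L ≠ 0 := fun h => by simp [h] at hL0
  have hMi : L * L⁻¹ = 1 := PowerSeries.mul_inv_cancel L (by rw [hL0]; norm_num)
  -- constant lemmas
  have hq1 : (3 : PowerSeries ℚ) * C (1/3 : ℚ) = 1 := by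
    rw [show (3:PowerSeries ℚ) = C (3 : ℚ) from (map_ofNat _ 3).symm, ← map_mul]
    norm_num
  have hq2 : (6 : PowerSeries ℚ) * C (9/2 : ℚ) = 27 := by
    rw [show (6:PowerSeries ℚ) = C (6 : ℚ) from (map_ofNat _ 6).symm,
      show (27:PowerSeries ℚ) = C (27 : ℚ) from (map_ofNat _ 27).symm, ← map_mul]
    exact congrArg (C (R := ℚ)) (by norm_num)
  have hq3 : (27 : PowerSeries ℚ) * C (1/3 : ℚ) ^ 3 = 1 := by
    rw [show (27:PowerSeries ℚ) = C (27 : ℚ) from (map_ofNat _ 27).symm, ← map_pow, ← map_mul]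
    norm_num
  have hq4 : (6 : PowerSeries ℚ) * (C (135/2 : ℚ) * C (1/3 : ℚ)) = 135 := by
    rw [show (6:PowerSeries ℚ) = C (6 : ℚ) from (map_ofNat _ 6).symm,
      show (135:PowerSeries ℚ) = C (135 : ℚ) from (map_ofNat _ 135).symm, ← map_mul, ← map_mul]
    exact congrArg (C (R := ℚ)) (by norm_num)
  have hq5 : (6 : PowerSeries ℚ) * C (27/2 : ℚ) = 81 := by
    rw [show (6:PowerSeries ℚ) = C (6 : ℚ) from (map_ofNat _ 6).symm,
      show (81:PowerSeries ℚ) = C (81 : ℚ) from (map_ofNat _ 81).symm, ← map_mul]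
    exact congrArg (C (R := ℚ)) (by norm_num)
  have hq6 : (216 : PowerSeries ℚ) * C (27/2 : ℚ) = 2916 := by
    rw [show (216:PowerSeries ℚ) = C (216 : ℚ) from (map_ofNat _ 216).symm,
      show (2916:PowerSeries ℚ) = C (2916 : ℚ) from (map_ofNat _ 2916).symm, ← map_mul]
    exact congrArg (C (R := ℚ)) (by norm_num)
  -- inverse in closed form
  have hMe : L⁻¹ = L ^ 2 * (1 - 27 * X) := by
    have h1 : L * (L ^ 2 * (1 - 27 * X)) = 1 := by linear_combination hL
    exact mul_left_cancel₀ hLne (hMi.trans h1.symm)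
  -- differentiate hL
  have hd := congrArg (derivative ℚ) hL
  have h27 : (27 : PowerSeries ℚ) = C (27 : ℚ) := (map_ofNat (C (R := ℚ)) 27).symm
  rw [Derivation.leibniz, Derivation.leibniz_pow, map_sub, Derivation.map_one_eq_zero,
    Derivation.leibniz, h27, PowerSeries.derivative_C, PowerSeries.derivative_X] at hd
  simp only [smul_eq_mul, nsmul_eq_mul, Nat.cast_ofNat, mul_zero, zero_mul, mul_one,
    zero_sub] at hd
  -- cancel 3 L^2
  have h3L2 : (3 : PowerSeries ℚ) * L ^ 2 ≠ 0 := by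
    intro h
    have := congrArg constantCoeff h
    simp [hL0, map_ofNat] at this
  have hd2 : (3 : PowerSeries ℚ) * L ^ 2 * ((derivative ℚ) L * (1 - 27 * X)) =
      3 * L ^ 2 * (9 * L) := by
    rw [← h27] at hd; linear_combination hd
  have hD' : (derivative ℚ) L * (1 - 27 * X) = 9 * L := mul_left_cancel₀ h3L2 hd2
  have hDL : X * (derivative ℚ) L = 9 * X * L ^ 4 := by
    have h1 : X * (derivative ℚ) L = X * (derivative ℚ) L * (L ^ 3 * (1 - 27 * X)) := by
      rw [hL, mul_one]
    rw [h1]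
    linear_combination (X * L ^ 3) * hD'
  -- closed forms
  have e1 : Y1 = C (1/3 : ℚ) * L ^ 2 := by
    rw [hY1, hMe, show logD L = X * (derivative ℚ) L from rfl, hDL]
    linear_combination (9 * X * L ^ 2 * (L ^ 3 * (1 - 27 * X) + 1)) * hL - 9 * X * L ^ 2 * hq1
  have e2' : logD Y1 = 6 * X * L ^ 5 := by
    rw [show logD Y1 = X * (derivative ℚ) Y1 from rfl, e1, Derivation.leibniz,
      Derivation.leibniz_pow, PowerSeries.derivative_C]
    simp only [smul_eq_mul, nsmul_eq_mul, Nat.cast_ofNat, mul_zero, add_zero, pow_one]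
    linear_combination (2 * C (1/3 : ℚ) * L) * hDL + 6 * X * L ^ 5 * hq1
  have e2 : Y2 = 6 * X * L ^ 4 := by
    rw [hY2, hMe, e2']
    linear_combination 6 * X * L ^ 4 * hL
  have e3' : logD Y2 = 6 * X * L ^ 4 + 216 * X ^ 2 * L ^ 7 := by
    rw [show logD Y2 = X * (derivative ℚ) Y2 from rfl, e2]
    rw [show (6 : PowerSeries ℚ) * X * L ^ 4 = C (6 : ℚ) * X * L ^ 4 from by
      rw [map_ofNat]]
    rw [mul_assoc, Derivation.leibniz, PowerSeries.derivative_C, Derivation.leibniz,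
      Derivation.leibniz_pow, PowerSeries.derivative_X]
    simp only [smul_eq_mul, nsmul_eq_mul, Nat.cast_ofNat, zero_mul, add_zero, mul_zero,
      zero_add, mul_one, map_ofNat]
    linear_combination (24 * X * L ^ 3) * hDL
  have e3 : Y3 = 6 * X * L ^ 3 + 216 * X ^ 2 * L ^ 6 := by
    rw [hY3, hMe, e3']
    linear_combination (6 * X * L ^ 3 + 216 * X ^ 2 * L ^ 6) * hL
  refine ⟨?_, ?_, ?_⟩
  · rw [e1]; linear_combination -L ^ 2 * hq1
  · rw [e1, e2]
    linear_combination (-(L ^ 4) * (3 * C (1/3 : ℚ) + 1)) * hq1 + X * L ^ 4 * hq2 - L * hL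
  · rw [e1, e2, e3]
    linear_combination (-(1 + L ^ 3 * (1 - 108 * X))) * hL - L ^ 6 * hq3 + X * L ^ 6 * hq4
      - X * L ^ 3 * hq5 - X ^ 2 * L ^ 6 * hq6
end

section
/- For every $k \geq 1$, the quantity $Y_k = (L^{-1}q\frac{d}{dq})^{k-1} Y_1$ with $Y_1 = \frac13 L^2$, $L = (1-27q)^{-1/3}$, lies in the degree-$k$ part of the graded polynomial ring $\mathbb{Q}[Y_1, Y_2, Y_3]$, where $Y_i$ has degree $i$. -/
/-!
`δ = L⁻¹ q d/dq` is a derivation of `ℚ⟦q⟧`, and differentiating `L³(1 - 27q) = 1` gives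
`3 δL = L³ - 1`. Together with `3 Y₁ = L²` this expresses `Y₂, Y₃, Y₄` as polynomials in `L`,
and comparing them yields `Y₄ = 9 Y₁² Y₂ + 15/2 Y₂²`. Hence the derivation of `ℚ[Y₁, Y₂, Y₃]`
sending `Y₁ ↦ Y₂ ↦ Y₃ ↦ 9 Y₁² Y₂ + 15/2 Y₂²` raises the weight by one and lifts `δ` along
evaluation; applying it `k - 1` times to `Y₁` gives a weight-`k` polynomial for `Y_k`.
-/

open PowerSeries

@[simp]
theorem Derivation.map_ofNat {R A M : Type*} [CommSemiring R] [CommSemiring A] [AddCommMonoid M]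
    [Algebra R A] [Module A M] [Module R M] (D : Derivation R A M) (n : ℕ) [n.AtLeastTwo] :
    D (ofNat(n) : A) = 0 :=
  D.map_natCast n

namespace MvPolynomial

variable {R σ : Type*} [CommRing R]

theorem IsWeightedHomogeneous.mkDerivation {M : Type*} [AddCommMonoid M] {w : σ → M} {d n : M}
    {f : σ → MvPolynomial σ R} (hf : ∀ i, (f i).IsWeightedHomogeneous w (w i + d))
    {P : MvPolynomial σ R} (hP : P.IsWeightedHomogeneous w n) :
    (mkDerivation R f P).IsWeightedHomogeneous w (n + d) := by
  classical
  rw [P.as_sum, map_sum]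
  refine IsWeightedHomogeneous.sum _ _ _ fun s hs ↦ ?_
  rw [mkDerivation_monomial, ← mem_weightedHomogeneousSubmodule]
  refine Submodule.smul_mem _ _ (Submodule.sum_mem _ fun i hi ↦ ?_)
  have hle : Finsupp.single i 1 ≤ s :=
    Finsupp.single_le_iff.mpr (Nat.one_le_iff_ne_zero.mpr (Finsupp.mem_support_iff.mp hi))
  have hdeg : Finsupp.weight w (s - Finsupp.single i 1) + w i = n := by
    rw [← hP (mem_support_iff.mp hs), ← tsub_add_cancel_of_le hle, map_add, add_tsub_cancel_right,
      Finsupp.weight_single, one_smul]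
  rw [mem_weightedHomogeneousSubmodule, ← hdeg, add_assoc]
  exact (isWeightedHomogeneous_monomial w _ _ rfl).mul (hf i)

theorem aeval_mkDerivation {A : Type*} [CommRing A] [Algebra R A] (δ : Derivation R A A)
    {v : σ → A} {f : σ → MvPolynomial σ R} (hf : ∀ i, aeval v (f i) = δ (v i))
    (P : MvPolynomial σ R) : aeval v (mkDerivation R f P) = δ (aeval v P) := by
  induction P using MvPolynomial.induction_on with
  | C a => simp [← algebraMap_eq, Derivation.map_algebraMap]
  | add p q hp hq => simp only [map_add, hp, hq]
  | mul_X p i hp =>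
    simp only [Derivation.leibniz, mkDerivation_X, smul_eq_mul, map_add, map_mul, aeval_X, hp, hf]

end MvPolynomial

section CubicDerivation

open MvPolynomial

variable {A : Type*} [CommRing A] [Algebra ℚ A] (δ : Derivation ℚ A A) {L : A}

theorem iterate_three_eq_of_three_mul_eq {y : A} (hL : 3 * δ L = L ^ 3 - 1)
    (hy : 3 * y = L ^ 2) :
    δ (δ (δ y)) = 9 * y ^ 2 * δ y + algebraMap ℚ A (15 / 2) * δ y ^ 2 := by
  have h2 : 9 * δ y = 2 * L * (L ^ 3 - 1) := by
    have := congrArg δ hy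
    simp only [Derivation.leibniz, Derivation.leibniz_pow, Derivation.map_ofNat, smul_eq_mul,
      nsmul_eq_mul] at this
    linear_combination 3 * this + 2 * L * hL
  have h3 : 27 * δ (δ y) = 2 * (L ^ 3 - 1) * (4 * L ^ 3 - 1) := by
    have := congrArg δ h2
    simp only [Derivation.leibniz, Derivation.leibniz_pow, Derivation.map_ofNat, map_sub,
      Derivation.map_one_eq_zero, smul_eq_mul, nsmul_eq_mul] at this
    linear_combination 3 * this + 2 * (4 * L ^ 3 - 1) * hL
  have h4 : 81 * δ (δ (δ y)) = L ^ 2 * (L ^ 3 - 1) * (48 * L ^ 3 - 30) := by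
    have := congrArg δ h3
    simp only [Derivation.leibniz, Derivation.leibniz_pow, Derivation.map_ofNat, map_sub,
      Derivation.map_one_eq_zero, smul_eq_mul, nsmul_eq_mul] at this
    linear_combination 3 * this + L ^ 2 * (48 * L ^ 3 - 30) * hL
  have hc : 2 * algebraMap ℚ A (15 / 2) = 15 := by
    rw [← map_ofNat (algebraMap ℚ A), ← map_mul, ← map_ofNat (algebraMap ℚ A)]
    norm_num
  have h162 : IsUnit (162 : A) := by
    rw [← map_ofNat (algebraMap ℚ A)]
    exact (IsUnit.mk0 (162 : ℚ) (by norm_num)).map (algebraMap ℚ A)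
  refine h162.mul_left_cancel ?_
  linear_combination 2 * h4 - 81 * δ y ^ 2 * hc - 162 * (3 * y + L ^ 2) * δ y * hy
    - 18 * L ^ 4 * h2 - 15 * (9 * δ y + 2 * L * (L ^ 3 - 1)) * h2

theorem exists_isWeightedHomogeneous_aeval_eq (hL : 3 * δ L = L ^ 3 - 1) (y : ℕ → A)
    (hy₁ : 3 * y 1 = L ^ 2) (hy : ∀ k ≥ 1, y (k + 1) = δ (y k)) :
    ∀ k ≥ 1, ∃ P : MvPolynomial (Fin 3) ℚ,
      P.IsWeightedHomogeneous (fun i : Fin 3 => (i : ℕ) + 1) k ∧ y k = aeval ![y 1, y 2, y 3] P := by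
  set w : Fin 3 → ℕ := fun i => (i : ℕ) + 1
  let Y (i : Fin 3) : MvPolynomial (Fin 3) ℚ := MvPolynomial.X i
  have hY (i : Fin 3) : (Y i).IsWeightedHomogeneous w (i + 1) := isWeightedHomogeneous_X ℚ w i
  let f : Fin 3 → MvPolynomial (Fin 3) ℚ :=
    ![Y 1, Y 2, MvPolynomial.C 9 * Y 0 ^ 2 * Y 1 + MvPolynomial.C (15 / 2) * Y 1 ^ 2]
  have hf : ∀ i, (f i).IsWeightedHomogeneous w (w i + 1) := by
    intro i
    fin_cases i
    · exact hY 1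
    · exact hY 2
    · exact (((isWeightedHomogeneous_C w _).mul ((hY 0).pow 2)).mul (hY 1)).add
        ((isWeightedHomogeneous_C w _).mul ((hY 1).pow 2))
  have hfv : ∀ i, aeval ![y 1, y 2, y 3] (f i) = δ (![y 1, y 2, y 3] i) := by
    intro i
    fin_cases i
    · simp [f, Y, hy 1 le_rfl]
    · simp [f, Y, hy 2 (by norm_num)]
    · simp [f, Y, hy 2 (by norm_num), hy 1 le_rfl, iterate_three_eq_of_three_mul_eq δ hL hy₁,
        map_ofNat]
  intro k hk
  induction k, hk using Nat.le_induction with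
  | base =>
    refine ⟨Y 0, hY 0, ?_⟩
    simp [Y]
  | succ k hk ih =>
    obtain ⟨P, hP, hyk⟩ := ih
    refine ⟨mkDerivation ℚ f P, hP.mkDerivation hf, ?_⟩
    rw [hy k hk, hyk, aeval_mkDerivation δ hfv]

end CubicDerivation

theorem three_mul_logD_eq {L : PowerSeries ℚ} (hL : L ^ 3 * (1 - 27 * X) = 1) :
    3 * logD L = L ^ 4 - L := by
  have h := congrArg (derivative ℚ) hL
  simp only [Derivation.leibniz, Derivation.leibniz_pow, map_sub, Derivation.map_ofNat,
    derivative_X, Derivation.map_one_eq_zero, smul_eq_mul, nsmul_eq_mul] at h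
  unfold logD
  linear_combination X * L * h - 3 * X * derivative ℚ L * hL - L * hL

/-- with `L = (1-27q)^{-1/3}`, `Y₁ = (1/3)L²` and
`Y_{k+1} = L⁻¹ q d/dq Y_k`, each `Y_k` (`k ≥ 1`) lies in the degree-`k` part of
the graded polynomial ring `ℚ[Y₁,Y₂,Y₃]` where `Y_i` has weight `i`: it is the
value at `(Y₁,Y₂,Y₃)` of a weighted-homogeneous polynomial of weighted degree `k`. -/
theorem Y_finite_generation (L : PowerSeries ℚ)
    (hL : L ^ 3 * (1 - 27 * PowerSeries.X) = 1)
    (hL0 : PowerSeries.constantCoeff (R := ℚ) L = 1)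
    (Y : ℕ → PowerSeries ℚ)
    (hY1 : Y 1 = PowerSeries.C (R := ℚ) (1/3) * L ^ 2)
    (hYrec : ∀ k ≥ 1, Y (k + 1) = L⁻¹ * logD (Y k)) :
    ∀ k ≥ 1, ∃ P : MvPolynomial (Fin 3) ℚ,
      MvPolynomial.IsWeightedHomogeneous (fun i : Fin 3 => (i : ℕ) + 1) P k ∧
      Y k = MvPolynomial.aeval ![Y 1, Y 2, Y 3] P := by
  let δ : Derivation ℚ ℚ⟦X⟧ ℚ⟦X⟧ := L⁻¹ • ((X : ℚ⟦X⟧) • derivative ℚ)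
  have hδL : 3 * δ L = L ^ 3 - 1 := by
    have hinv : L⁻¹ * L = 1 := PowerSeries.inv_mul_cancel L (by simp [hL0])
    change 3 * (L⁻¹ * logD L) = _
    linear_combination L⁻¹ * three_mul_logD_eq hL + (L ^ 3 - 1) * hinv
  have hY1' : 3 * Y 1 = L ^ 2 := by
    rw [hY1, ← mul_assoc, ← map_ofNat C, ← map_mul]
    norm_num
  exact exists_isWeightedHomogeneous_aeval_eq δ hδL Y hY1' hYrec
end

section
/- Borwein's cubic identity: the cubic theta functions satisfy $a(Q)^3 = b(Q)^3 + c(Q)^3$, where $c(Q) = \sum_{n,m\in\mathbb{Z}} Q^{(n+\frac13)^2 + (n+\frac13)(m+\frac13) + (m+\frac13)^2}$; equivalently, $1 - \frac{b(Q)^3}{a(Q)^3} = \frac{c(Q)^3}{a(Q)^3}$, so $27q := 1 - b^3/a^3$ defines a $Q$-series with positive coefficients starting $27Q + O(Q^2)$. -/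
open Complex

/-- The cubic AGM theta function `a(Q) = ∑_{n,m∈ℤ} Q^{n²+nm+m²}`. -/
noncomputable def thetaA (Q : ℂ) : ℂ :=
  ∑' p : ℤ × ℤ, Q ^ (p.1 ^ 2 + p.1 * p.2 + p.2 ^ 2).toNat

/-- The cubic AGM theta function `b(Q) = ∑_{n,m∈ℤ} ω^{n-m} Q^{n²+nm+m²}`,
`ω = e^{2πi/3}`. -/
noncomputable def thetaB (Q : ℂ) : ℂ :=
  ∑' p : ℤ × ℤ,
    Complex.exp (2 * Real.pi * Complex.I / 3) ^ (p.1 - p.2) *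
      Q ^ (p.1 ^ 2 + p.1 * p.2 + p.2 ^ 2).toNat

/-- The cubic theta function
`c(Q) = ∑_{n,m∈ℤ} Q^{(n+1/3)² + (n+1/3)(m+1/3) + (m+1/3)²}` (complex powers). -/
noncomputable def thetaC (Q : ℂ) : ℂ :=
  ∑' p : ℤ × ℤ,
    Q ^ ((((p.1 : ℂ) + 1/3) ^ 2 + ((p.1 : ℂ) + 1/3) * ((p.2 : ℂ) + 1/3)
          + ((p.2 : ℂ) + 1/3) ^ 2 : ℂ))

/-!
Cubing the three series turns them into sums over triples `z` of lattice points. With `N z`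
the sum of the three Eisenstein norms and `t z` the exponent of `ω`,
`a³ - b³ = ∑ (1 - ω^(t z)) Q^(N z)`: the class `t ≡ 0 (mod 3)` cancels, and the classes
`t ≡ 1` and `t ≡ 2` are exchanged by `z ↦ -z`, so `a³ - b³ = 3 S` with `S` the sum of
`Q^(N z)` over `t z ≡ 1`. In `c³` the three exponents `(n + 1/3)² + …` add up to an integer,
and an affine isometry identifies each of the three orbits of a rotation of order 3 of the
shifted lattice with the class `t ≡ 1`, so `c³ = 3 S` as well.
-/

lemma pow_toNat_mul_pow_toNat {M : Type*} [Monoid M] (x : M) {a b : ℤ} (ha : 0 ≤ a)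
    (hb : 0 ≤ b) : x ^ a.toNat * x ^ b.toNat = x ^ (a + b).toNat := by
  rw [← pow_add, Int.toNat_add ha hb]

lemma summable_pow_of_natAbs_add_natAbs_le {r : ℝ} (hr₀ : 0 < r) (hr₁ : r < 1)
    {f : ℤ × ℤ → ℕ} {C : ℕ} (hf : ∀ p, p.1.natAbs + p.2.natAbs ≤ f p + C) :
    Summable fun p => r ^ f p := by
  have hgeom : Summable fun n : ℤ => r ^ n.natAbs :=
    .of_nat_of_neg (by simpa using summable_geometric_of_lt_one hr₀.le hr₁)
      (by simpa using summable_geometric_of_lt_one hr₀.le hr₁)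
  have hpair : Summable fun p : ℤ × ℤ => r ^ (p.1.natAbs + p.2.natAbs) := by
    simpa only [pow_add] using
      hgeom.mul_of_nonneg hgeom (fun _ => by positivity) (fun _ => by positivity)
  rw [← summable_mul_left_iff (pow_ne_zero C hr₀.ne')]
  refine hpair.of_nonneg_of_le (fun _ => by positivity) fun p => ?_
  rw [← pow_add, add_comm]
  exact pow_le_pow_of_le_one hr₀.le hr₁.le (hf p)

lemma hasSum_pow_three {R ι : Type*} [NormedRing R] [CompleteSpace R] {f : ι → R}
    (hf : Summable fun i => ‖f i‖) :
    HasSum (fun z : ι × ι × ι => f z.1 * (f z.2.1 * f z.2.2)) ((∑' i, f i) ^ 3) := by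
  have h₁ : HasSum f (∑' i, f i) := hf.of_norm.hasSum
  have h₂ : HasSum (fun z : ι × ι => f z.1 * f z.2) ((∑' i, f i) * ∑' i, f i) :=
    h₁.mul h₁ (summable_mul_of_summable_norm hf hf)
  have h₃ : Summable fun z : ι × ι × ι => f z.1 * (f z.2.1 * f z.2.2) :=
    summable_mul_of_summable_norm (g := fun z : ι × ι => f z.1 * f z.2) hf (hf.mul_norm hf)
  have h := h₁.mul h₂ h₃
  rwa [pow_three]

lemma HasSum.eq_sum_tsum_equiv {E ι κ ι' : Type*} [NormedAddCommGroup E] [CompleteSpace E]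
    [Fintype κ] {f : ι → E} {a : E} (hf : HasSum f a) (e : κ × ι' ≃ ι) :
    a = ∑ j, ∑' p, f (e (j, p)) := by
  have he : HasSum (f ∘ e) a := e.hasSum_iff.2 hf
  exact (he.prod_fiberwise fun j => (he.summable.prod_factor j).hasSum).unique (hasSum_fintype _)

namespace Borwein

def eisensteinNorm (p : ℤ × ℤ) : ℤ := p.1 ^ 2 + p.1 * p.2 + p.2 ^ 2

def shiftedNorm (p : ℤ × ℤ) : ℤ := eisensteinNorm p + p.1 + p.2

lemma eisensteinNorm_nonneg (p : ℤ × ℤ) : 0 ≤ eisensteinNorm p := by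
  unfold eisensteinNorm
  nlinarith [sq_nonneg (p.1 + p.2), sq_nonneg p.1, sq_nonneg p.2]

lemma shiftedNorm_nonneg (p : ℤ × ℤ) : 0 ≤ shiftedNorm p := by
  have : 0 ≤ 2 * shiftedNorm p + 1 := by
    unfold shiftedNorm eisensteinNorm
    nlinarith [sq_nonneg (p.1 + p.2 + 1), sq_nonneg p.1, sq_nonneg p.2]
  omega

lemma eisensteinNorm_toNat_ne_zero {p : ℤ × ℤ} (hp : p ≠ 0) : (eisensteinNorm p).toNat ≠ 0 := by
  intro h
  have hle : eisensteinNorm p ≤ 0 := by omega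
  unfold eisensteinNorm at hle
  have h₁ : p.1 ^ 2 = 0 := by nlinarith [sq_nonneg (p.1 + p.2), sq_nonneg p.1, sq_nonneg p.2]
  have h₂ : p.2 ^ 2 = 0 := by nlinarith [sq_nonneg (p.1 + p.2), sq_nonneg p.1, sq_nonneg p.2]
  exact hp (Prod.ext (pow_eq_zero_iff two_ne_zero |>.1 h₁) (pow_eq_zero_iff two_ne_zero |>.1 h₂))

lemma natAbs_add_natAbs_le_eisensteinNorm (p : ℤ × ℤ) :
    p.1.natAbs + p.2.natAbs ≤ (eisensteinNorm p).toNat + 1 := by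
  have : (p.1.natAbs + p.2.natAbs : ℤ) ≤ eisensteinNorm p + 1 := by
    unfold eisensteinNorm
    nlinarith [Int.natAbs_sq p.1, Int.natAbs_sq p.2, sq_nonneg (p.1 + p.2),
      sq_nonneg ((p.1.natAbs : ℤ) - 1), sq_nonneg ((p.2.natAbs : ℤ) - 1)]
  omega

lemma natAbs_add_natAbs_le_shiftedNorm (p : ℤ × ℤ) :
    p.1.natAbs + p.2.natAbs ≤ (shiftedNorm p).toNat + 1 := by
  have : (p.1.natAbs + p.2.natAbs : ℤ) ≤ shiftedNorm p + 1 := by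
    unfold shiftedNorm eisensteinNorm
    nlinarith [Int.natAbs_sq p.1, Int.natAbs_sq p.2, sq_nonneg (p.1 + p.2 + 1),
      sq_nonneg ((p.1.natAbs : ℤ) - 1), sq_nonneg ((p.2.natAbs : ℤ) - 1)]
  omega

lemma thetaC_exponent (p : ℤ × ℤ) :
    ((p.1 : ℂ) + 1/3) ^ 2 + ((p.1 : ℂ) + 1/3) * ((p.2 : ℂ) + 1/3) + ((p.2 : ℂ) + 1/3) ^ 2 =
      ((shiftedNorm p + 1/3 : ℝ) : ℂ) := by
  simp only [shiftedNorm, eisensteinNorm]; push_cast; ring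

abbrev Triple : Type := (ℤ × ℤ) × (ℤ × ℤ) × (ℤ × ℤ)

def tripleNorm (z : Triple) : ℤ :=
  eisensteinNorm z.1 + eisensteinNorm z.2.1 + eisensteinNorm z.2.2

def tripleTwist (z : Triple) : ℤ :=
  (z.1.1 - z.1.2) + (z.2.1.1 - z.2.1.2) + (z.2.2.1 - z.2.2.2)

def tripleShiftedNorm (w : Triple) : ℤ :=
  shiftedNorm w.1 + shiftedNorm w.2.1 + shiftedNorm w.2.2 + 1

lemma tripleShiftedNorm_nonneg (w : Triple) : 0 ≤ tripleShiftedNorm w := by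
  have := shiftedNorm_nonneg w.1
  have := shiftedNorm_nonneg w.2.1
  have := shiftedNorm_nonneg w.2.2
  unfold tripleShiftedNorm; omega

lemma tripleNorm_neg (z : Triple) : tripleNorm (-z) = tripleNorm z := by
  simp only [tripleNorm, eisensteinNorm, Prod.fst_neg, Prod.snd_neg]; ring

def residueParam (c : ℤ) (p : Triple) : Triple :=
  (p.1, p.2.1, (c + 3 * p.2.2.2 + p.2.2.1 - (p.1.1 - p.1.2) - (p.2.1.1 - p.2.1.2), p.2.2.1))

lemma tripleTwist_residueParam (c : ℤ) (p : Triple) :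
    tripleTwist (residueParam c p) = c + 3 * p.2.2.2 := by
  simp only [tripleTwist, residueParam]; ring

def residueEquiv : Fin 3 × Triple ≃ Triple where
  toFun x := residueParam x.1 x.2
  invFun z := (⟨(tripleTwist z % 3).toNat, by omega⟩, (z.1, z.2.1, (z.2.2.2, tripleTwist z / 3)))
  left_inv := by
    rintro ⟨⟨j, hj⟩, ⟨a₁, b₁⟩, ⟨a₂, b₂⟩, ⟨a₃, b₃⟩⟩
    simp only [tripleTwist, residueParam, Prod.mk.injEq, Fin.mk.injEq, true_and]
    omega
  right_inv := by
    rintro ⟨⟨a₁, b₁⟩, ⟨a₂, b₂⟩, ⟨a₃, b₃⟩⟩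
    simp only [tripleTwist, residueParam, Prod.mk.injEq, true_and, and_true]
    omega

def negShift (p : Triple) : Triple := (-p.1, -p.2.1, (-p.2.2.1, -1 - p.2.2.2))

lemma negShift_involutive : Function.Involutive negShift := by
  rintro ⟨⟨a₁, b₁⟩, ⟨a₂, b₂⟩, ⟨a₃, b₃⟩⟩
  simp [negShift]

lemma residueParam_two_negShift (p : Triple) :
    residueParam 2 (negShift p) = -residueParam 1 p := by
  simp only [residueParam, negShift, Prod.neg_mk, Prod.fst_neg, Prod.snd_neg, Prod.mk.injEq]
  refine ⟨trivial, trivial, ?_, trivial⟩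
  ring

/-- The rotation by `2π/3` of the hexagonal lattice about the point `(-1/3, -1/3)`. -/
def rotate (p : ℤ × ℤ) : ℤ × ℤ := (p.2, -p.1 - p.2 - 1)

def rotateInv (p : ℤ × ℤ) : ℤ × ℤ := (-p.1 - p.2 - 1, p.1)

lemma shiftedNorm_rotate (p : ℤ × ℤ) : shiftedNorm (rotate p) = shiftedNorm p := by
  simp only [shiftedNorm, eisensteinNorm, rotate]; ring

lemma shiftedNorm_iterate_rotate (j : ℕ) (p : ℤ × ℤ) :
    shiftedNorm (rotate^[j] p) = shiftedNorm p := by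
  induction j generalizing p with
  | zero => rfl
  | succ j ih => rw [Function.iterate_succ_apply, ih, shiftedNorm_rotate]

lemma tripleTwist_rotate_fst (q : ℤ × ℤ) (r : (ℤ × ℤ) × (ℤ × ℤ)) :
    tripleTwist (rotate q, r) = tripleTwist (q, r) + 3 * q.2 + 1 := by
  simp only [tripleTwist, rotate]; ring

/-- An affine bijection from `Triple` onto the triples of twist `≡ 0 (mod 3)` that carries
`tripleNorm ∘ residueParam 1` to `tripleShiftedNorm`; rotating its first pair reaches the other
two residue classes of the twist. -/
def shiftedParam (p : Triple) : Triple :=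
  let ((n₁, m₁), (n₂, m₂), (n₃, k)) := p
  ((k, m₁ + m₂ + n₃ + k), (-n₂ + n₃ + k, n₁ + n₂ - m₂ - n₃ - 2 * k - 1),
    (n₁ - m₁ + n₂ - n₃ - 2 * k - 1, m₁ - n₂ + k))

def shiftedParamInv (w : Triple) : Triple :=
  let ((a₁, b₁), (a₂, b₂), (a₃, b₃)) := w
  let n₂ := (2 * a₁ + b₁ - a₂ + b₂ - a₃ - 2 * b₃) / 3
  let m₂ := a₁ + b₁ - a₂ - b₃ - 2 * n₂
  let n₃ := a₂ - a₁ + n₂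
  ((b₂ + 2 * a₁ + 1 - n₂ + m₂ + n₃, b₃ - a₁ + n₂), (n₂, m₂), (n₃, a₁))

lemma tripleShiftedNorm_shiftedParam (p : Triple) :
    tripleShiftedNorm (shiftedParam p) = tripleNorm (residueParam 1 p) := by
  simp only [tripleShiftedNorm, shiftedNorm, eisensteinNorm, shiftedParam, tripleNorm,
    residueParam]
  ring

lemma tripleTwist_shiftedParam (p : Triple) : tripleTwist (shiftedParam p) = -3 * p.1.2 := by
  simp only [tripleTwist, shiftedParam]; ring

lemma tripleTwist_iterate_rotate_shiftedParam_emod (j : ℕ) (p : Triple) :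
    tripleTwist (rotate^[j] (shiftedParam p).1, (shiftedParam p).2) % 3 = j % 3 := by
  induction j with
  | zero => simp [tripleTwist_shiftedParam]
  | succ j ih =>
    rw [Function.iterate_succ_apply', tripleTwist_rotate_fst]
    push_cast
    omega

def shiftEquiv : Fin 3 × Triple ≃ Triple where
  toFun x := (rotate^[x.1] (shiftedParam x.2).1, (shiftedParam x.2).2)
  invFun w :=
    (⟨(tripleTwist w % 3).toNat, by omega⟩,
      shiftedParamInv (rotateInv^[(tripleTwist w % 3).toNat] w.1, w.2))
  left_inv := by
    rintro ⟨⟨j, hj⟩, p⟩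
    have hj' : (tripleTwist (rotate^[j] (shiftedParam p).1, (shiftedParam p).2) % 3).toNat = j := by
      rw [tripleTwist_iterate_rotate_shiftedParam_emod]; omega
    simp only [hj']
    obtain ⟨⟨n₁, m₁⟩, ⟨n₂, m₂⟩, ⟨n₃, k⟩⟩ := p
    interval_cases j <;>
      · simp only [Function.iterate_succ, Function.iterate_zero, Function.comp_apply, id,
          rotate, rotateInv, shiftedParam, shiftedParamInv, Prod.mk.injEq, true_and, and_true]
        omega
  right_inv := by
    intro w
    obtain ⟨j, hj3, hj⟩ : ∃ j : ℕ, j < 3 ∧ (tripleTwist w % 3).toNat = j := ⟨_, by omega, rfl⟩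
    simp only [hj]
    obtain ⟨⟨a₁, b₁⟩, ⟨a₂, b₂⟩, ⟨a₃, b₃⟩⟩ := w
    simp only [tripleTwist] at hj
    interval_cases j <;>
      · simp only [Function.iterate_succ, Function.iterate_zero, Function.comp_apply, id,
          rotate, rotateInv, shiftedParam, shiftedParamInv, Prod.mk.injEq, true_and]
        omega

lemma tripleShiftedNorm_shiftEquiv (x : Fin 3 × Triple) :
    tripleShiftedNorm (shiftEquiv x) = tripleNorm (residueParam 1 x.2) := by
  rw [← tripleShiftedNorm_shiftedParam]
  simp only [shiftEquiv, Equiv.coe_fn_mk, tripleShiftedNorm, shiftedNorm_iterate_rotate]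

local notation "ω" => Complex.exp (2 * Real.pi * Complex.I / 3)

lemma isPrimitiveRoot_omega : IsPrimitiveRoot ω 3 := by
  simpa using Complex.isPrimitiveRoot_exp 3 (by norm_num)

lemma norm_omega_zpow (k : ℤ) : ‖ω ^ k‖ = 1 := by
  rw [norm_zpow, isPrimitiveRoot_omega.norm'_eq_one (by norm_num), one_zpow]

lemma omega_zpow_add_three_mul (c k : ℤ) : ω ^ (c + 3 * k) = ω ^ c := by
  rw [zpow_add₀ (Complex.exp_ne_zero _), zpow_mul, zpow_ofNat, isPrimitiveRoot_omega.pow_eq_one,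
    one_zpow, mul_one]

lemma one_add_omega_add_omega_sq : 1 + ω + ω ^ 2 = 0 := by
  simpa [Finset.sum_range_succ] using isPrimitiveRoot_omega.geom_sum_eq_zero (by norm_num)

section Cubes

variable {Q : ℂ}

lemma summable_norm_thetaA_term (hQ₀ : Q ≠ 0) (hQ : ‖Q‖ < 1) :
    Summable fun p : ℤ × ℤ => ‖Q ^ (eisensteinNorm p).toNat‖ := by
  simpa only [norm_pow] using summable_pow_of_natAbs_add_natAbs_le (norm_pos_iff.2 hQ₀) hQ
    natAbs_add_natAbs_le_eisensteinNorm

lemma norm_thetaC_term_le (hQ : ‖Q‖ < 1) (p : ℤ × ℤ) :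
    ‖Q ^ (((shiftedNorm p + 1/3 : ℝ) : ℂ))‖ ≤ ‖Q‖ ^ (shiftedNorm p).toNat := by
  rw [norm_cpow_real, ← Real.rpow_natCast]
  refine Real.rpow_le_rpow_of_exponent_ge' (norm_nonneg _) hQ.le (by positivity) ?_
  have : ((shiftedNorm p).toNat : ℝ) = shiftedNorm p := by
    exact_mod_cast Int.toNat_of_nonneg (shiftedNorm_nonneg p)
  linarith

lemma summable_norm_thetaC_term (hQ₀ : Q ≠ 0) (hQ : ‖Q‖ < 1) :
    Summable fun p : ℤ × ℤ => ‖Q ^ (((shiftedNorm p + 1/3 : ℝ) : ℂ))‖ :=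
  (summable_pow_of_natAbs_add_natAbs_le (norm_pos_iff.2 hQ₀) hQ
    natAbs_add_natAbs_le_shiftedNorm).of_nonneg_of_le (fun _ => norm_nonneg _)
    (norm_thetaC_term_le hQ)

lemma hasSum_thetaA_cube (hQ₀ : Q ≠ 0) (hQ : ‖Q‖ < 1) :
    HasSum (fun z : Triple => Q ^ (tripleNorm z).toNat) (thetaA Q ^ 3) := by
  refine (hasSum_pow_three (summable_norm_thetaA_term hQ₀ hQ)).congr_fun fun z => ?_
  have h₁ := eisensteinNorm_nonneg z.1
  have h₂ := eisensteinNorm_nonneg z.2.1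
  have h₃ := eisensteinNorm_nonneg z.2.2
  rw [pow_toNat_mul_pow_toNat _ h₂ h₃, pow_toNat_mul_pow_toNat _ h₁ (by positivity), tripleNorm,
    add_assoc]

lemma hasSum_thetaB_cube (hQ₀ : Q ≠ 0) (hQ : ‖Q‖ < 1) :
    HasSum (fun z : Triple => ω ^ tripleTwist z * Q ^ (tripleNorm z).toNat) (thetaB Q ^ 3) := by
  have hB : Summable fun p : ℤ × ℤ => ‖ω ^ (p.1 - p.2) * Q ^ (eisensteinNorm p).toNat‖ := by
    simpa only [norm_mul, norm_omega_zpow, one_mul] using summable_norm_thetaA_term hQ₀ hQ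
  refine (hasSum_pow_three hB).congr_fun fun z => ?_
  have h₁ := eisensteinNorm_nonneg z.1
  have h₂ := eisensteinNorm_nonneg z.2.1
  have h₃ := eisensteinNorm_nonneg z.2.2
  have hω : ω ^ tripleTwist z =
      ω ^ (z.1.1 - z.1.2) * (ω ^ (z.2.1.1 - z.2.1.2) * ω ^ (z.2.2.1 - z.2.2.2)) := by
    rw [← zpow_add₀ (Complex.exp_ne_zero _), ← zpow_add₀ (Complex.exp_ne_zero _), tripleTwist,
      add_assoc]
  rw [hω, tripleNorm, add_assoc, ← pow_toNat_mul_pow_toNat _ h₁ (by positivity),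
    ← pow_toNat_mul_pow_toNat _ h₂ h₃]
  ring

lemma hasSum_thetaC_cube (hQ₀ : Q ≠ 0) (hQ : ‖Q‖ < 1) :
    HasSum (fun w : Triple => Q ^ (tripleShiftedNorm w).toNat) (thetaC Q ^ 3) := by
  simp only [thetaC, thetaC_exponent]
  refine (hasSum_pow_three (summable_norm_thetaC_term hQ₀ hQ)).congr_fun fun w => ?_
  rw [← cpow_add _ _ hQ₀, ← cpow_add _ _ hQ₀, ← cpow_natCast]
  congr 1
  have : ((tripleShiftedNorm w).toNat : ℂ) = tripleShiftedNorm w := by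
    exact_mod_cast Int.toNat_of_nonneg (tripleShiftedNorm_nonneg w)
  rw [this, tripleShiftedNorm]
  push_cast
  ring

noncomputable def dissectionSum (Q : ℂ) (c : ℤ) : ℂ :=
  ∑' p : Triple, Q ^ (tripleNorm (residueParam c p)).toNat

lemma dissectionSum_two_eq_one (Q : ℂ) : dissectionSum Q 2 = dissectionSum Q 1 := by
  rw [dissectionSum, ← (negShift_involutive.toPerm _).tsum_eq]
  exact tsum_congr fun p => by
    rw [Function.Involutive.coe_toPerm, residueParam_two_negShift, tripleNorm_neg]

lemma thetaA_cube_sub_thetaB_cube (hQ₀ : Q ≠ 0) (hQ : ‖Q‖ < 1) :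
    thetaA Q ^ 3 - thetaB Q ^ 3 = 3 * dissectionSum Q 1 := by
  have h := ((hasSum_thetaA_cube hQ₀ hQ).sub (hasSum_thetaB_cube hQ₀ hQ)).eq_sum_tsum_equiv
    residueEquiv
  have hterm : ∀ (j : Fin 3) (p : Triple),
      Q ^ (tripleNorm (residueEquiv (j, p))).toNat -
          ω ^ tripleTwist (residueEquiv (j, p)) * Q ^ (tripleNorm (residueEquiv (j, p))).toNat =
        (1 - ω ^ (j : ℕ)) * Q ^ (tripleNorm (residueParam j p)).toNat := by
    intro j p
    simp only [residueEquiv, Equiv.coe_fn_mk, tripleTwist_residueParam, omega_zpow_add_three_mul,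
      zpow_natCast]
    ring
  simp only [hterm, tsum_mul_left, Fin.sum_univ_three, Fin.val_zero, Fin.val_one, Fin.val_two,
    Nat.cast_zero, Nat.cast_one, Nat.cast_ofNat, ← dissectionSum.eq_1,
    dissectionSum_two_eq_one] at h
  linear_combination h - dissectionSum Q 1 * one_add_omega_add_omega_sq

lemma thetaC_cube (hQ₀ : Q ≠ 0) (hQ : ‖Q‖ < 1) : thetaC Q ^ 3 = 3 * dissectionSum Q 1 := by
  have h := (hasSum_thetaC_cube hQ₀ hQ).eq_sum_tsum_equiv shiftEquiv
  simpa only [tripleShiftedNorm_shiftEquiv, Finset.sum_const, Finset.card_univ, Fintype.card_fin,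
    nsmul_eq_mul, Nat.cast_ofNat, ← dissectionSum.eq_1] using h

end Cubes

lemma thetaA_zero : thetaA 0 = 1 := by
  rw [thetaA, tsum_eq_single 0 fun p hp => zero_pow (eisensteinNorm_toNat_ne_zero hp)]
  rfl

lemma thetaB_zero : thetaB 0 = 1 := by
  rw [thetaB, tsum_eq_single 0 fun p hp =>
    mul_eq_zero_of_right _ (zero_pow (eisensteinNorm_toNat_ne_zero hp))]
  simp

lemma thetaC_zero : thetaC 0 = 0 := by
  have hterm (p : ℤ × ℤ) : (0 : ℂ) ^ ((shiftedNorm p + 1/3 : ℝ) : ℂ) = 0 := by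
    refine zero_cpow (ofReal_ne_zero.2 ?_)
    have := shiftedNorm_nonneg p
    positivity
  simp only [thetaC, thetaC_exponent, hterm, tsum_zero]

end Borwein

open Borwein

/-- Borwein's cubic identity: `a(Q)³ = b(Q)³ + c(Q)³` for
`|Q| < 1`; equivalently (when `a(Q) ≠ 0`) `1 - b³/a³ = c³/a³`. -/
theorem borwein_cubic_identity :
    ∀ Q : ℂ, ‖Q‖ < 1 →
      thetaA Q ^ 3 = thetaB Q ^ 3 + thetaC Q ^ 3 ∧
      (thetaA Q ≠ 0 →
        1 - thetaB Q ^ 3 / thetaA Q ^ 3 = thetaC Q ^ 3 / thetaA Q ^ 3) := by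
  intro Q hQ
  have key : thetaA Q ^ 3 = thetaB Q ^ 3 + thetaC Q ^ 3 := by
    obtain rfl | hQ₀ := eq_or_ne Q 0
    · simp [thetaA_zero, thetaB_zero, thetaC_zero]
    · linear_combination thetaA_cube_sub_thetaB_cube hQ₀ hQ - thetaC_cube hQ₀ hQ
  refine ⟨key, fun ha => ?_⟩
  field_simp
  linear_combination key
end
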